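/- arXiv:2201.03403 — 7 statements merged into one kernel-verified Lean document; each statement's English description precedes it below -/
import Mathlib

section
/- If ν_k → ν and μ_k → μ in distribution (weak convergence of probability measures on ℝⁿ), and for every k there exists an L-Lipschitz map T_k with (T_k)_# ν_k = μ_k, then there exists an L-Lipschitz map T with T_# ν = μ. -/
/-!
Tightness controls the maps `T k`: the `ν k` and the `μ k` put most of their mass on fixed compact
sets, so every `T k` sends some point of a fixed ball into a fixed bounded set, and by the Lipschitz
bound every orbit `(T k x)ₖ` is bounded. Limits along an ultrafilter finer than `atTop` then define
an `L`-Lipschitz map `S`, and since the `T k` are equicontinuous, `T k → S` locally uniformly along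
that ultrafilter. For bounded continuous `f`, tightness of `(ν k)` gives
`∫ f ∘ T k ∂ν k - ∫ f ∘ S ∂ν k → 0`, while `∫ f ∘ S ∂ν k → ∫ f ∘ S ∂ν`; hence
`μ k = (T k)_# ν k → S_# ν` along the ultrafilter, and `S_# ν = μ` by uniqueness of limits.
-/

open MeasureTheory Filter Topology Metric Set
open scoped ENNReal NNReal

theorem Continuous.comp_tendstoLocallyUniformly {ι α β γ : Type*} [TopologicalSpace α]
    [UniformSpace β] [UniformSpace γ] {F : ι → α → β} {f : α → β} {p : Filter ι} {g : β → γ}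
    (hg : Continuous g) (hf : Continuous f) (h : TendstoLocallyUniformly F f p) :
    TendstoLocallyUniformly (g ∘ F ·) (g ∘ f) p := by
  rw [tendstoLocallyUniformly_iff_forall_tendsto] at h ⊢
  intro x
  have hfx : Tendsto (fun q : ι × α ↦ f q.2) (p ×ˢ 𝓝 x) (𝓝 (f x)) :=
    (hf.tendsto x).comp tendsto_snd
  have hFx : Tendsto (fun q : ι × α ↦ F q.1 q.2) (p ×ˢ 𝓝 x) (𝓝 (f x)) :=
    hfx.congr_uniformity (h x)
  exact (((hg.tendsto _).comp hfx).prodMk_nhds ((hg.tendsto _).comp hFx)).mono_right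
    (nhds_le_uniformity _)

theorem Equicontinuous.tendstoLocallyUniformly_of_tendsto {ι X α : Type*} [TopologicalSpace X]
    [LocallyCompactSpace X] [UniformSpace α] {F : ι → X → α} {f : X → α} {l : Filter ι}
    (hF : Equicontinuous F) (h : Tendsto F l (𝓝 f)) : TendstoLocallyUniformly F f l := by
  rw [tendstoLocallyUniformly_iff_forall_isCompact]
  have hcov : ⋃₀ {K : Set X | IsCompact K} = univ :=
    eq_univ_of_forall fun x ↦ mem_sUnion_of_mem (mem_singleton x) isCompact_singleton
  exact UniformOnFun.tendsto_iff_tendstoUniformlyOn.mp <|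
    (EquicontinuousOn.tendsto_uniformOnFun_iff_pi (𝔖 := {K | IsCompact K}) (fun _ hK ↦ hK) hcov
      (fun K _ ↦ hF.equicontinuousOn K) l f).mpr h

lemma exists_lipschitzWith_tendsto_ultrafilter {ι X Y : Type*} [PseudoMetricSpace X]
    [PseudoMetricSpace Y] [ProperSpace Y] (U : Ultrafilter ι) {L : ℝ≥0} {T : ι → X → Y}
    (hT : ∀ i, LipschitzWith L (T i)) (hbdd : ∀ x, Bornology.IsBounded (range fun i ↦ T i x)) :
    ∃ S : X → Y, LipschitzWith L S ∧ ∀ x, Tendsto (fun i ↦ T i x) U (𝓝 (S x)) := by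
  have hlim (x : X) : ∃ y, Tendsto (fun i ↦ T i x) U (𝓝 y) := by
    obtain ⟨y, -, hy⟩ := (hbdd x).isCompact_closure.ultrafilter_le_nhds (U.map fun i ↦ T i x)
      (le_principal_iff.2 <| mem_map.2 <| univ_mem' fun i ↦ subset_closure ⟨i, rfl⟩)
    exact ⟨y, hy⟩
  choose S hS using hlim
  refine ⟨S, LipschitzWith.of_dist_le_mul fun x y ↦ ?_, hS⟩
  exact le_of_tendsto ((hS x).dist (hS y)) (Eventually.of_forall fun i ↦ (hT i).dist_le_mul x y)

lemma isTightMeasureSet_range_of_tendsto {X : Type*} [MeasurableSpace X] [PseudoMetricSpace X]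
    [CompleteSpace X] [SecondCountableTopology X] [OpensMeasurableSpace X]
    {ρ : ℕ → ProbabilityMeasure X} {ρ₀ : ProbabilityMeasure X} (h : Tendsto ρ atTop (𝓝 ρ₀)) :
    IsTightMeasureSet (range fun k ↦ (ρ k : Measure X)) := by
  have hcl : IsCompact (closure (range ρ)) :=
    h.isCompact_insert_range.closure_of_subset (subset_insert _ _)
  convert isTightMeasureSet_of_isCompact_closure hcl using 1
  ext; simp

lemma exists_mem_mem_of_measure_compl_add_lt {X Y : Type*} [MeasurableSpace X] [MeasurableSpace Y]
    {ρ : Measure X} [IsProbabilityMeasure ρ] {T : X → Y} (hT : Measurable T) {A : Set X}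
    {B : Set Y} (hB : MeasurableSet B) (h : ρ Aᶜ + ρ.map T Bᶜ < 1) : ∃ y ∈ A, T y ∈ B := by
  by_contra! hAB
  rw [Measure.map_apply hT hB.compl] at h
  have : ρ univ ≤ ρ Aᶜ + ρ (T ⁻¹' Bᶜ) :=
    (measure_mono fun y _ ↦ (em (y ∈ A)).elim (fun hy ↦ Or.inr (hAB y hy)) Or.inl).trans
      (measure_union_le _ _)
  simp only [measure_univ] at this
  exact h.not_ge this

lemma isBounded_range_apply_of_isTightMeasureSet {ι X Y : Type*} [MeasurableSpace X]
    [PseudoMetricSpace X] [OpensMeasurableSpace X] [MeasurableSpace Y] [PseudoMetricSpace Y]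
    [BorelSpace Y] {ν : ι → ProbabilityMeasure X} {μ : ι → ProbabilityMeasure Y}
    (hν : IsTightMeasureSet (range fun i ↦ (ν i : Measure X)))
    (hμ : IsTightMeasureSet (range fun i ↦ (μ i : Measure Y)))
    {L : ℝ≥0} {T : ι → X → Y} (hT : ∀ i, LipschitzWith L (T i))
    (hpush : ∀ i, (ν i : Measure X).map (T i) = μ i) (x : X) :
    Bornology.IsBounded (range fun i ↦ T i x) := by
  rw [isTightMeasureSet_iff_exists_isCompact_measure_compl_le] at hν hμ
  obtain ⟨K, hK, hνK⟩ := hν 3⁻¹ (by norm_num)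
  obtain ⟨K', hK', hμK'⟩ := hμ 3⁻¹ (by norm_num)
  obtain ⟨r, hr⟩ := hK.isBounded.subset_closedBall x
  refine (hK'.isBounded.cthickening (δ := L * r)).subset (range_subset_iff.2 fun i ↦ ?_)
  have hmass : (ν i : Measure X) (closedBall x r)ᶜ + (ν i : Measure X).map (T i) (closure K')ᶜ
      < 1 := by
    rw [hpush]
    calc (ν i : Measure X) (closedBall x r)ᶜ + (μ i : Measure Y) (closure K')ᶜ
        ≤ 3⁻¹ + 3⁻¹ := add_le_add
          ((measure_mono (compl_subset_compl.2 hr)).trans (hνK _ ⟨i, rfl⟩))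
          ((measure_mono (compl_subset_compl.2 subset_closure)).trans (hμK' _ ⟨i, rfl⟩))
      _ < 3⁻¹ + 3⁻¹ + 3⁻¹ := ENNReal.lt_add_right (by simp) (by simp)
      _ = 1 := ENNReal.inv_three_add_inv_three
  obtain ⟨y, hy, hTy⟩ := exists_mem_mem_of_measure_compl_add_lt (hT i).continuous.measurable
    isClosed_closure.measurableSet hmass
  rw [← cthickening_closure]
  exact mem_cthickening_of_dist_le _ _ _ _ hTy <|
    ((hT i).dist_le_mul x y).trans (by gcongr; simpa [dist_comm] using hy)

theorem tendsto_integral_sub_of_tendstoLocallyUniformly {ι X E : Type*} [TopologicalSpace X]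
    [LocallyCompactSpace X] [T2Space X] [MeasurableSpace X] [OpensMeasurableSpace X]
    [NormedAddCommGroup E] [NormedSpace ℝ E] {l : Filter ι} {ρ : ι → Measure X}
    [∀ i, IsProbabilityMeasure (ρ i)] (hρ : IsTightMeasureSet (range ρ)) {G : ι → X → E}
    {g : X → E} (hG : TendstoLocallyUniformly G g l) {M : ℝ} (hM : ∀ i x, ‖G i x - g x‖ ≤ M)
    (hGi : ∀ i, Integrable (G i) (ρ i)) (hgi : ∀ i, Integrable g (ρ i)) :
    Tendsto (fun i ↦ ∫ x, G i x ∂ρ i - ∫ x, g x ∂ρ i) l (𝓝 0) := by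
  rw [Metric.tendsto_nhds]
  intro ε hε
  set η := ε / (2 * (|M| + 1))
  have hη : 0 < η := by positivity
  obtain ⟨K, hK, hρK⟩ := isTightMeasureSet_iff_exists_isCompact_measure_compl_le.1 hρ
    (ENNReal.ofReal η) (by simpa using hη)
  have hunif := Metric.tendstoUniformlyOn_iff.1
    (tendstoLocallyUniformly_iff_forall_isCompact.1 hG K hK) (ε / 2) (half_pos hε)
  filter_upwards [hunif] with i hi
  have hin (x : X) (hx : x ∈ K) : ‖G i x - g x‖ ≤ ε / 2 := by
    simpa [dist_eq_norm'] using (hi x hx).le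
  have hout : (ρ i).real Kᶜ ≤ η :=
    ENNReal.toReal_le_of_le_ofReal hη.le (hρK _ ⟨i, rfl⟩)
  rw [dist_zero_right, ← integral_sub (hGi i) (hgi i),
    ← integral_add_compl (f := fun x ↦ G i x - g x) hK.measurableSet ((hGi i).sub (hgi i))]
  calc ‖∫ x in K, G i x - g x ∂ρ i + ∫ x in Kᶜ, G i x - g x ∂ρ i‖
      ≤ ε / 2 * (ρ i).real K + M * (ρ i).real Kᶜ :=
        (norm_add_le _ _).trans (add_le_add
          (norm_setIntegral_le_of_norm_le_const (measure_lt_top _ _) hin)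
          (norm_setIntegral_le_of_norm_le_const (measure_lt_top _ _) fun x _ ↦ hM i x))
    _ ≤ ε / 2 * 1 + |M| * η := by
        gcongr
        · exact measureReal_le_one
        · exact le_abs_self M
    _ < ε := by
        have : |M| * η < ε / 2 := by
          rw [mul_div_assoc', div_lt_div_iff₀ (by positivity) two_pos]
          nlinarith [abs_nonneg M]
        linarith

theorem MeasureTheory.ProbabilityMeasure.tendsto_map_of_tendstoLocallyUniformly {ι X Y : Type*}
    [TopologicalSpace X] [LocallyCompactSpace X] [T2Space X] [MeasurableSpace X]
    [OpensMeasurableSpace X] [UniformSpace Y] [MeasurableSpace Y] [BorelSpace Y]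
    {l : Filter ι} {ν : ι → ProbabilityMeasure X} {ν₀ : ProbabilityMeasure X}
    (hν : Tendsto ν l (𝓝 ν₀)) (hνt : IsTightMeasureSet (range fun i ↦ (ν i : Measure X)))
    {T : ι → X → Y} {S : X → Y} (hT : ∀ i, Continuous (T i)) (hS : Continuous S)
    (hTS : TendstoLocallyUniformly T S l) :
    Tendsto (fun i ↦ (ν i).map (hT i).aemeasurable) l (𝓝 (ν₀.map hS.aemeasurable)) := by
  rw [ProbabilityMeasure.tendsto_iff_forall_integral_tendsto]
  intro f
  simp only [ProbabilityMeasure.toMeasure_map,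
    integral_map (hT _).aemeasurable f.continuous.aestronglyMeasurable,
    integral_map hS.aemeasurable f.continuous.aestronglyMeasurable]
  have hdiff := tendsto_integral_sub_of_tendstoLocallyUniformly hνt
    (f.continuous.comp_tendstoLocallyUniformly hS hTS) (M := 2 * ‖f‖)
    (fun i x ↦ (norm_sub_le _ _).trans (by
      simp only [Function.comp_apply]
      linarith [f.norm_coe_le_norm (T i x), f.norm_coe_le_norm (S x)]))
    (fun i ↦ (f.compContinuous ⟨T i, hT i⟩).integrable _)
    (fun i ↦ (f.compContinuous ⟨S, hS⟩).integrable _)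
  have hlim := ProbabilityMeasure.tendsto_iff_forall_integral_tendsto.1 hν
    (f.compContinuous ⟨S, hS⟩)
  simpa using hdiff.add hlim

/-- If ν_k → ν and μ_k → μ weakly (probability measures on ℝⁿ), and for
every k there is an L-Lipschitz map T_k pushing ν_k onto μ_k, then there is an
L-Lipschitz map T pushing ν onto μ. -/
theorem stmt_0 (n : ℕ) (L : NNReal)
    (ν μ : ProbabilityMeasure (EuclideanSpace ℝ (Fin n)))
    (νk μk : ℕ → ProbabilityMeasure (EuclideanSpace ℝ (Fin n)))
    (hν : Tendsto νk atTop (nhds ν)) (hμ : Tendsto μk atTop (nhds μ))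
    (T : ℕ → EuclideanSpace ℝ (Fin n) → EuclideanSpace ℝ (Fin n))
    (hT : ∀ k, LipschitzWith L (T k))
    (hpush : ∀ k, (νk k : Measure (EuclideanSpace ℝ (Fin n))).map (T k) = μk k) :
    ∃ S : EuclideanSpace ℝ (Fin n) → EuclideanSpace ℝ (Fin n),
      LipschitzWith L S ∧ (ν : Measure (EuclideanSpace ℝ (Fin n))).map S = μ := by
  have hνt := isTightMeasureSet_range_of_tendsto hν
  have hμt := isTightMeasureSet_range_of_tendsto hμ
  let U := Ultrafilter.of (atTop : Filter ℕ)
  have hU : (U : Filter ℕ) ≤ atTop := Ultrafilter.of_le _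
  obtain ⟨S, hS, hTS⟩ := exists_lipschitzWith_tendsto_ultrafilter U hT
    (isBounded_range_apply_of_isTightMeasureSet hνt hμt hT hpush)
  have hloc : TendstoLocallyUniformly T S U :=
    (LipschitzWith.uniformEquicontinuous T L hT).equicontinuous.tendstoLocallyUniformly_of_tendsto
      (tendsto_pi_nhds.2 hTS)
  have hmap := ProbabilityMeasure.tendsto_map_of_tendstoLocallyUniformly (hν.mono_left hU) hνt
    (fun k ↦ (hT k).continuous) hS.continuous hloc
  have hpush_prob (k : ℕ) : (νk k).map (hT k).continuous.aemeasurable = μk k :=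
    Subtype.ext (hpush k)
  simp only [hpush_prob] at hmap
  refine ⟨S, hS, ?_⟩
  rw [← ProbabilityMeasure.toMeasure_map ν hS.continuous.aemeasurable,
    tendsto_nhds_unique hmap (hμ.mono_left hU)]
end

section
/- Let π be a probability measure on ℝⁿ × ℝⁿ whose support satisfies: for all (w,x), (y,z) in supp(π), |x − z| ≤ L|w − y|. Then for every w in the support of the first marginal ν of π there is a unique x with (w,x) ∈ supp(π), and the map w ↦ x is L-Lipschitz on supp(ν). -/
open MeasureTheory Filter Topology

/-- The topological support of a measure: points all of whose neighborhoods have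
positive measure. -/
def msupport {α : Type*} [TopologicalSpace α] [MeasurableSpace α] (μ : Measure α) : Set α :=
  {x | ∀ U ∈ nhds x, μ U ≠ 0}

theorem isClosed_msupport {α : Type*} [TopologicalSpace α] [MeasurableSpace α]
    (μ : Measure α) : IsClosed (msupport μ) := by
  rw [← isOpen_compl_iff, isOpen_iff_mem_nhds]
  intro x hx
  simp only [msupport, Set.mem_compl_iff, Set.mem_setOf_eq, not_forall] at hx
  obtain ⟨U, hU, hU0⟩ := hx
  push_neg at hU0
  refine Filter.mem_of_superset (interior_mem_nhds.2 hU) ?_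
  intro y hy hyS
  exact hyS U (mem_nhds_iff.2 ⟨interior U, interior_subset, isOpen_interior, hy⟩) hU0

/-- if π is an L-Lipschitz coupling on ℝⁿ × ℝⁿ, then for every w in
the support of the first marginal ν of π there is a unique x with (w,x) ∈ supp π,
and the map w ↦ x is L-Lipschitz on supp ν. -/
theorem stmt_1 (n : ℕ) (L : NNReal)
    (π : Measure (EuclideanSpace ℝ (Fin n) × EuclideanSpace ℝ (Fin n)))
    [IsProbabilityMeasure π]
    (hlip : ∀ p ∈ msupport π, ∀ q ∈ msupport π, dist p.2 q.2 ≤ L * dist p.1 q.1) :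
    (∀ w ∈ msupport (π.map Prod.fst), ∃! x, (w, x) ∈ msupport π) ∧
    ∃ T : EuclideanSpace ℝ (Fin n) → EuclideanSpace ℝ (Fin n),
      (∀ w ∈ msupport (π.map Prod.fst), (w, T w) ∈ msupport π) ∧
      LipschitzOnWith L T (msupport (π.map Prod.fst)) := by
  classical
  set S := msupport π with hS
  have hSc : IsClosed S := isClosed_msupport π
  have hnull : π Sᶜ = 0 := by
    apply measure_null_of_locally_null
    intro x hx
    simp only [hS, msupport, Set.mem_compl_iff, Set.mem_setOf_eq, not_forall] at hx
    obtain ⟨U, hU, hU0⟩ := hx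
    push_neg at hU0
    exact ⟨U, nhdsWithin_le_nhds hU, hU0⟩
  have hnear : ∀ w ∈ msupport (π.map Prod.fst), ∀ ε : ℝ, 0 < ε →
      ∃ p ∈ S, dist p.1 w < ε := by
    intro w hw ε hε
    have hb := hw (Metric.ball w ε) (Metric.ball_mem_nhds w hε)
    rw [Measure.map_apply measurable_fst measurableSet_ball] at hb
    by_contra h
    push_neg at h
    apply hb
    refine measure_mono_null ?_ hnull
    intro p hp hpS
    exact absurd (Metric.mem_ball.1 hp) (not_lt.2 (h p hpS))
  have hex : ∀ w ∈ msupport (π.map Prod.fst), ∃ x, (w, x) ∈ S := by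
    intro w hw
    have hp : ∀ k : ℕ, ∃ p ∈ S, dist p.1 w < 1 / (k + 1) :=
      fun k => hnear w hw _ (by positivity)
    choose p hpS hpd using hp
    have hcauchy : CauchySeq (fun k => (p k).2) := by
      apply cauchySeq_of_le_tendsto_0 (fun N : ℕ => (L : ℝ) * (2 / (N + 1)))
      · intro j k N hj hk
        have h1 : dist (p j).2 (p k).2 ≤ L * dist (p j).1 (p k).1 :=
          hlip _ (hpS j) _ (hpS k)
        have hj1 : (1 : ℝ) / (j + 1) ≤ 1 / (N + 1) := by
          apply one_div_le_one_div_of_le (by positivity)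
          exact_mod_cast Nat.add_le_add_right hj 1
        have hk1 : (1 : ℝ) / (k + 1) ≤ 1 / (N + 1) := by
          apply one_div_le_one_div_of_le (by positivity)
          exact_mod_cast Nat.add_le_add_right hk 1
        have htri := dist_triangle (p j).1 w (p k).1
        have hdk : dist w (p k).1 = dist (p k).1 w := dist_comm _ _
        have h2 : dist (p j).1 (p k).1 ≤ 2 / (N + 1) := by
          have hj2 := hpd j
          have hk2 := hpd k
          rw [hdk] at htri
          have : (2 : ℝ) / (N + 1) = 1 / (N + 1) + 1 / (N + 1) := by ring
          linarith
        calc dist (p j).2 (p k).2 ≤ L * dist (p j).1 (p k).1 := h1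
          _ ≤ (L : ℝ) * (2 / (N + 1)) := by
              exact mul_le_mul_of_nonneg_left h2 L.coe_nonneg
      · have h := tendsto_one_div_add_atTop_nhds_zero_nat.const_mul ((L : ℝ) * 2)
        simp only [mul_zero] at h
        convert h using 2 with N
        ring
    obtain ⟨x, hx⟩ := cauchySeq_tendsto_of_complete hcauchy
    have h1 : Tendsto (fun k => (p k).1) atTop (𝓝 w) := by
      rw [tendsto_iff_dist_tendsto_zero]
      exact squeeze_zero (fun k => dist_nonneg) (fun k => (hpd k).le)
        tendsto_one_div_add_atTop_nhds_zero_nat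
    have hT : Tendsto p atTop (𝓝 (w, x)) := h1.prodMk_nhds hx
    exact ⟨x, hSc.mem_of_tendsto hT (Filter.Eventually.of_forall hpS)⟩
  have huniq : ∀ w x y, (w, x) ∈ S → (w, y) ∈ S → x = y := by
    intro w x y hx hy
    have h := hlip _ hx _ hy
    simp only [dist_self, mul_zero] at h
    exact dist_le_zero.1 h
  refine ⟨fun w hw => ?_, ?_⟩
  · obtain ⟨x, hx⟩ := hex w hw
    exact ⟨x, hx, fun y hy => huniq w y x hy hx⟩
  · refine ⟨fun w => if h : ∃ x, (w, x) ∈ S then h.choose else 0, fun w hw => ?_, ?_⟩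
    · show (w, if h : ∃ x, (w, x) ∈ S then h.choose else 0) ∈ S
      rw [dif_pos (hex w hw)]
      exact (hex w hw).choose_spec
    · apply LipschitzOnWith.of_dist_le_mul
      intro w hw y hy
      have hw' : (w, (if h : ∃ x, (w, x) ∈ S then h.choose else 0)) ∈ S := by
        rw [dif_pos (hex w hw)]; exact (hex w hw).choose_spec
      have hy' : (y, (if h : ∃ x, (y, x) ∈ S then h.choose else 0)) ∈ S := by
        rw [dif_pos (hex y hy)]; exact (hex y hy).choose_spec
      have h := hlip _ hw' _ hy'
      simpa using h
end

section
/- If π_k is a sequence of probability measures on ℝⁿ × ℝⁿ converging in distribution to π, and each π_k is an L-Lipschitz coupling (meaning |x − z| ≤ L|w − y| for all (w,x),(y,z) in supp(π_k)), then π is also an L-Lipschitz coupling. -/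
open MeasureTheory Filter

lemma exists_mem_msupport {α : Type*} [TopologicalSpace α]
    [SecondCountableTopology α] [MeasurableSpace α]
    (μ : MeasureTheory.Measure α) {B : Set α} (h : μ B ≠ 0) :
    ∃ x ∈ B, x ∈ msupport μ := by
  by_contra h'
  push_neg at h'
  have hV : ∀ x ∈ B, ∃ V : Set α, x ∈ V ∧ IsOpen V ∧ μ V = 0 := by
    intro x hx
    obtain ⟨U, hU, hU0⟩ := by
      have := h' x hx
      simpa [msupport, not_forall] using this
    obtain ⟨V, hVU, hVopen, hxV⟩ := mem_nhds_iff.mp hU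
    exact ⟨V, hxV, hVopen, measure_mono_null hVU hU0⟩
  choose V hxV hVopen hV0 using hV
  have hBsub : B ⊆ ⋃ x : B, V x x.2 := fun x hx =>
    Set.mem_iUnion.mpr ⟨⟨x, hx⟩, hxV x hx⟩
  obtain ⟨T, hTc, hTU⟩ := TopologicalSpace.isOpen_iUnion_countable
    (fun x : B => V x x.2) (fun x => hVopen x x.2)
  apply h
  refine measure_mono_null (hBsub.trans hTU.ge) ?_
  exact (measure_biUnion_null_iff hTc).mpr fun x _ => hV0 x x.2

/-- a weak limit of L-Lipschitz couplings is an L-Lipschitz coupling. -/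
theorem stmt_2 (n : ℕ) (L : NNReal)
    (πk : ℕ → ProbabilityMeasure (EuclideanSpace ℝ (Fin n) × EuclideanSpace ℝ (Fin n)))
    (π : ProbabilityMeasure (EuclideanSpace ℝ (Fin n) × EuclideanSpace ℝ (Fin n)))
    (hconv : Tendsto πk atTop (nhds π))
    (hlip : ∀ k, ∀ p ∈ msupport (πk k : Measure (EuclideanSpace ℝ (Fin n) × EuclideanSpace ℝ (Fin n))), ∀ q ∈ msupport (πk k : Measure (EuclideanSpace ℝ (Fin n) × EuclideanSpace ℝ (Fin n))),
      dist p.2 q.2 ≤ L * dist p.1 q.1) :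
    ∀ p ∈ msupport (π : Measure (EuclideanSpace ℝ (Fin n) × EuclideanSpace ℝ (Fin n))), ∀ q ∈ msupport (π : Measure (EuclideanSpace ℝ (Fin n) × EuclideanSpace ℝ (Fin n))),
      dist p.2 q.2 ≤ L * dist p.1 q.1 := by
  intro p hp q hq
  have key : ∀ ε : ℝ, 0 < ε → dist p.2 q.2 ≤ L * dist p.1 q.1 + (2 + 2 * L) * ε := by
    intro ε hε
    set Bp := Metric.ball p ε
    set Bq := Metric.ball q ε
    have hπp : (π : Measure _) Bp ≠ 0 := hp Bp (Metric.ball_mem_nhds p hε)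
    have hπq : (π : Measure _) Bq ≠ 0 := hq Bq (Metric.ball_mem_nhds q hε)
    have hlimp := ProbabilityMeasure.le_liminf_measure_open_of_tendsto hconv
      (Metric.isOpen_ball (x := p) (ε := ε))
    have hlimq := ProbabilityMeasure.le_liminf_measure_open_of_tendsto hconv
      (Metric.isOpen_ball (x := q) (ε := ε))
    have hevp : ∀ᶠ k in atTop, 0 < (πk k : Measure _) Bp :=
      eventually_lt_of_lt_liminf (lt_of_lt_of_le (pos_iff_ne_zero.mpr hπp) hlimp)
    have hevq : ∀ᶠ k in atTop, 0 < (πk k : Measure _) Bq :=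
      eventually_lt_of_lt_liminf (lt_of_lt_of_le (pos_iff_ne_zero.mpr hπq) hlimq)
    obtain ⟨k, hkp, hkq⟩ := (hevp.and hevq).exists
    obtain ⟨pk, hpkB, hpkS⟩ := exists_mem_msupport (α := EuclideanSpace ℝ (Fin n) × EuclideanSpace ℝ (Fin n)) (πk k) hkp.ne'
    obtain ⟨qk, hqkB, hqkS⟩ := exists_mem_msupport (α := EuclideanSpace ℝ (Fin n) × EuclideanSpace ℝ (Fin n)) (πk k) hkq.ne'
    have hL := hlip k pk hpkS qk hqkS
    have hdpp : dist pk p < ε := Metric.mem_ball.mp hpkB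
    have hdqq : dist qk q < ε := Metric.mem_ball.mp hqkB
    have h2p : dist pk.2 p.2 ≤ dist pk p := le_max_right _ _
    have h2q : dist qk.2 q.2 ≤ dist qk q := le_max_right _ _
    have h1p : dist pk.1 p.1 ≤ dist pk p := le_max_left _ _
    have h1q : dist qk.1 q.1 ≤ dist qk q := le_max_left _ _
    have hstep : dist p.2 q.2 ≤ dist pk.2 p.2 + dist pk.2 qk.2 + dist qk.2 q.2 := by
      calc dist p.2 q.2 ≤ dist p.2 pk.2 + dist pk.2 q.2 := dist_triangle _ _ _
        _ ≤ dist p.2 pk.2 + (dist pk.2 qk.2 + dist qk.2 q.2) := by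
            gcongr; exact dist_triangle _ _ _
        _ = dist pk.2 p.2 + dist pk.2 qk.2 + dist qk.2 q.2 := by rw [dist_comm p.2 pk.2]; ring
    have hstep1 : dist pk.1 qk.1 ≤ dist p.1 q.1 + 2 * ε := by
      calc dist pk.1 qk.1 ≤ dist pk.1 p.1 + dist p.1 q.1 + dist q.1 qk.1 := dist_triangle4 _ _ _ _
        _ ≤ ε + dist p.1 q.1 + ε := by
            rw [dist_comm q.1 qk.1]
            have a1 := h1p.trans hdpp.le
            have a2 := h1q.trans hdqq.le
            gcongr
        _ = dist p.1 q.1 + 2 * ε := by ring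
    calc dist p.2 q.2 ≤ dist pk.2 p.2 + dist pk.2 qk.2 + dist qk.2 q.2 := hstep
      _ ≤ ε + L * dist pk.1 qk.1 + ε := by
          
          have b1 := h2p.trans hdpp.le
          have b2 := h2q.trans hdqq.le
          gcongr
      _ ≤ ε + L * (dist p.1 q.1 + 2 * ε) + ε := by gcongr
      _ = L * dist p.1 q.1 + (2 + 2 * L) * ε := by ring
  have hc : (0:ℝ) < 2 + 2 * L := by positivity
  refine le_of_forall_pos_le_add fun ε hε => ?_
  have := key (ε / (2 + 2 * L)) (by positivity)
  rwa [mul_div_cancel₀ _ hc.ne'] at this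
end

section
/- Let S_t: ℝⁿ → ℝⁿ solve dS_t(x)/dt = ∇V_t(S_t(x)) with S_0 = Id, where for each t the function V_t is differentiable and (−λ(t))-convex for an integrable λ: [0,∞) → ℝ. Then for all x, y and t ≥ 0: |S_t(x) − S_t(y)| ≥ |x − y| · exp(−∫₀ᵗ λ(s) ds). -/
/-!
Convexity of `V_t + λ(t)‖·‖²/2` makes `∇V_t + λ(t) id` monotone, so `w(t) = S_t x - S_t y`
satisfies `⟪w, w'⟫ ≥ -λ ‖w‖²`. Wherever `w ≠ 0` this says `(-log ‖w‖²)' ≤ 2λ`, and integrating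
this one-sided bound (which needs only integrability of `λ`) gives the estimate. The same bound,
passed to the limit, shows that `w` has no first zero.
-/

open MeasureTheory Set

theorem ConvexOn.hasFDerivAt_apply_sub_le_apply_sub {E : Type*} [NormedAddCommGroup E]
    [NormedSpace ℝ E] {f : E → ℝ} {a b : E} {fa fb : E →L[ℝ] ℝ} (hf : ConvexOn ℝ univ f)
    (ha : HasFDerivAt f fa a) (hb : HasFDerivAt f fb b) : fb (a - b) ≤ fa (a - b) := by
  have hline : ConvexOn ℝ univ (f ∘ AffineMap.lineMap (k := ℝ) b a) := by
    simpa using hf.comp_affineMap (AffineMap.lineMap (k := ℝ) b a)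
  have hderiv : ∀ {θ : ℝ} {z : E} {fz : E →L[ℝ] ℝ}, AffineMap.lineMap b a θ = z →
      HasFDerivAt f fz z → HasDerivAt (f ∘ AffineMap.lineMap (k := ℝ) b a) (fz (a - b)) θ := by
    rintro θ z fz rfl hz
    exact hz.comp_hasDerivAt θ AffineMap.hasDerivAt_lineMap
  exact (hline.le_slope_of_hasDerivAt (mem_univ 0) (mem_univ 1) one_pos
    (hderiv (by simp) hb)).trans
    (hline.slope_le_of_hasDerivAt (mem_univ 0) (mem_univ 1) one_pos (hderiv (by simp) ha))

theorem neg_mul_norm_sq_le_inner_gradient_sub {E : Type*} [NormedAddCommGroup E]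
    [InnerProductSpace ℝ E] [CompleteSpace E] {V : E → ℝ} {c : ℝ} (hV : Differentiable ℝ V)
    (hc : ConvexOn ℝ univ (fun z => V z + c * ‖z‖ ^ 2 / 2)) (a b : E) :
    -(c * ‖a - b‖ ^ 2) ≤ inner ℝ (a - b) (gradient V a - gradient V b) := by
  have hW : ∀ z, HasFDerivAt (fun z => V z + c * ‖z‖ ^ 2 / 2)
      (InnerProductSpace.toDual ℝ E (gradient V z) + c • innerSL ℝ z) z := by
    intro z
    have h := (hV z).hasGradientAt.hasFDerivAt.add
      ((hasStrictFDerivAt_norm_sq z).hasFDerivAt.const_mul (c / 2))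
    refine (h.congr_fderiv ?_).congr_of_eventuallyEq (Filter.Eventually.of_forall fun y => ?_)
    · ext v
      simp only [add_apply, smul_apply, coe_innerSL_apply, nsmul_eq_mul, Nat.cast_ofNat,
        smul_eq_mul]
      ring
    · simp only [Pi.add_apply]
      ring
  have key := hc.hasFDerivAt_apply_sub_le_apply_sub (hW a) (hW b)
  simp only [add_apply, smul_apply, innerSL_apply_apply, InnerProductSpace.toDual_apply_apply,
    smul_eq_mul] at key
  have hsq : ‖a - b‖ ^ 2 = inner ℝ a (a - b) - inner ℝ b (a - b) := by
    rw [← inner_sub_left, real_inner_self_eq_norm_sq]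
  have hsplit : inner ℝ (a - b) (gradient V a - gradient V b)
      = inner ℝ (gradient V a) (a - b) - inner ℝ (gradient V b) (a - b) := by
    rw [real_inner_comm, inner_sub_left]
  rw [hsq, hsplit]
  linarith

theorem mul_exp_neg_integral_le_of_forall_pos {f f' c : ℝ → ℝ} {a b : ℝ} (hab : a ≤ b)
    (hcont : ContinuousOn f (Icc a b))
    (hderiv : ∀ x ∈ Ioo a b, HasDerivWithinAt f (f' x) (Ioi x) x)
    (hc : IntegrableOn c (Icc a b)) (hineq : ∀ x ∈ Ioo a b, -c x * f x ≤ f' x)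
    (hpos : ∀ x ∈ Icc a b, 0 < f x) :
    f a * Real.exp (-∫ x in a..b, c x) ≤ f b := by
  have hlog := intervalIntegral.sub_le_integral_of_hasDeriv_right_of_le hab
    (hcont.log fun x hx => (hpos x hx).ne').neg
    (fun x hx => ((hderiv x hx).log (hpos x (Ioo_subset_Icc_self hx)).ne').neg) hc
    (fun x hx => neg_le.1 ((le_div_iff₀ (hpos x (Ioo_subset_Icc_self hx))).2 (hineq x hx)))
  simp only [Pi.neg_apply] at hlog
  calc f a * Real.exp (-∫ x in a..b, c x)
      = Real.exp (Real.log (f a) - ∫ x in a..b, c x) := by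
        rw [Real.exp_sub, Real.exp_log (hpos a (left_mem_Icc.2 hab)), div_eq_mul_inv,
          Real.exp_neg]
    _ ≤ Real.exp (Real.log (f b)) := Real.exp_le_exp.2 (by linarith)
    _ = f b := Real.exp_log (hpos b (right_mem_Icc.2 hab))

theorem mul_exp_neg_integral_le_of_pos {f f' c : ℝ → ℝ} {a b : ℝ} (hab : a ≤ b)
    (hcont : ContinuousOn f (Icc a b))
    (hderiv : ∀ x ∈ Ioo a b, HasDerivWithinAt f (f' x) (Ioi x) x)
    (hc : IntegrableOn c (Icc a b)) (hineq : ∀ x ∈ Ioo a b, -c x * f x ≤ f' x)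
    (hfa : 0 < f a) :
    f a * Real.exp (-∫ x in a..b, c x) ≤ f b := by
  refine mul_exp_neg_integral_le_of_forall_pos hab hcont hderiv hc hineq ?_
  -- `T` is the first zero of `f`; the bound holds on `[a, T)`, hence at `T`, forcing `f T > 0`.
  by_contra! hzero
  set Z := Icc a b ∩ f ⁻¹' Iic 0
  have hZ : IsClosed Z := hcont.preimage_isClosed_of_isClosed isClosed_Icc isClosed_Iic
  have hZa : BddBelow Z := ⟨a, fun x hx => hx.1.1⟩
  have hT : sInf Z ∈ Z := hZ.csInf_mem hzero hZa
  set T := sInf Z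
  have haT : a < T := hT.1.1.lt_of_ne fun h => hfa.not_ge (h ▸ hT.2)
  have hTb : Icc a T ⊆ Icc a b := Icc_subset_Icc_right hT.1.2
  have hbelow : ∀ s ∈ Ico a T, f a * Real.exp (-∫ x in a..s, c x) ≤ f s := by
    intro s hs
    have hsT : Icc a s ⊆ Icc a T := Icc_subset_Icc_right hs.2.le
    refine mul_exp_neg_integral_le_of_forall_pos hs.1 (hcont.mono (hsT.trans hTb))
      (fun x hx => hderiv x (Ioo_subset_Ioo_right (hs.2.le.trans hT.1.2) hx))
      (hc.mono_set (hsT.trans hTb))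
      (fun x hx => hineq x (Ioo_subset_Ioo_right (hs.2.le.trans hT.1.2) hx)) fun x hx => ?_
    by_contra! hfx
    exact (csInf_le hZa ⟨hsT.trans hTb hx, hfx⟩).not_gt (hx.2.trans_lt hs.2)
  have hprim : ContinuousOn (fun s => f a * Real.exp (-∫ x in a..s, c x)) (Icc a b) := by
    have h := intervalIntegral.continuousOn_primitive_interval (uIcc_of_le hab ▸ hc)
    rw [uIcc_of_le hab] at h
    exact continuousOn_const.mul h.neg.rexp
  have hT_le : f a * Real.exp (-∫ x in a..T, c x) ≤ f T :=
    ContinuousWithinAt.closure_le (by rw [closure_Ico haT.ne]; exact right_mem_Icc.2 haT.le)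
      ((hprim T hT.1).mono (Ico_subset_Icc_self.trans hTb))
      ((hcont T hT.1).mono (Ico_subset_Icc_self.trans hTb)) hbelow
  have hfT : f T ≤ 0 := hT.2
  linarith [mul_pos hfa (Real.exp_pos (-∫ x in a..T, c x))]

theorem norm_mul_exp_neg_integral_le {E : Type*} [NormedAddCommGroup E] [InnerProductSpace ℝ E]
    {w w' : ℝ → E} {c : ℝ → ℝ} {a b : ℝ} (hab : a ≤ b) (hcont : ContinuousOn w (Icc a b))
    (hderiv : ∀ x ∈ Ioo a b, HasDerivWithinAt w (w' x) (Ioi x) x)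
    (hc : IntegrableOn c (Icc a b))
    (hineq : ∀ x ∈ Ioo a b, -(c x * ‖w x‖ ^ 2) ≤ inner ℝ (w x) (w' x)) :
    ‖w a‖ * Real.exp (-∫ x in a..b, c x) ≤ ‖w b‖ := by
  rcases eq_or_ne (w a) 0 with hwa | hwa
  · simp [hwa]
  have hsq := mul_exp_neg_integral_le_of_pos (f := fun x => ‖w x‖ ^ 2)
    (f' := fun x => 2 * inner ℝ (w x) (w' x)) (c := fun x => 2 * c x) hab (hcont.norm.pow 2)
    (fun x hx => (hderiv x hx).norm_sq) (hc.const_mul 2)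
    (fun x hx => by linarith [hineq x hx]) (by positivity)
  rw [intervalIntegral.integral_const_mul] at hsq
  refine (pow_le_pow_iff_left₀ (by positivity) (norm_nonneg _) two_ne_zero).1 ?_
  calc (‖w a‖ * Real.exp (-∫ x in a..b, c x)) ^ 2
      = ‖w a‖ ^ 2 * Real.exp (-(2 * ∫ x in a..b, c x)) := by
        rw [mul_pow, ← Real.exp_nat_mul]
        ring_nf
    _ ≤ ‖w b‖ ^ 2 := hsq

/-- if `S_t` solves `dS_t(x)/dt = ∇V_t(S_t(x))`, `S_0 = Id`, where each
`V_t` is differentiable and `(-λ(t))`-convex for an integrable `λ`, then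
`|S_t(x) - S_t(y)| ≥ |x - y| exp(-∫₀ᵗ λ)`. -/
theorem stmt_9 (n : ℕ) (lam : ℝ → ℝ)
    (hlam : IntegrableOn lam (Set.Ici 0))
    (V : ℝ → EuclideanSpace ℝ (Fin n) → ℝ)
    (hVdiff : ∀ t, 0 ≤ t → Differentiable ℝ (V t))
    (hVconv : ∀ t, 0 ≤ t →
      ConvexOn ℝ Set.univ (fun x => V t x + lam t * ‖x‖ ^ 2 / 2))
    (S : ℝ → EuclideanSpace ℝ (Fin n) → EuclideanSpace ℝ (Fin n))
    (hS0 : S 0 = id)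
    (hSdiff : ∀ x, ∀ t, 0 ≤ t →
      HasDerivAt (fun u => S u x) (gradient (V t) (S t x)) t)
    (x y : EuclideanSpace ℝ (Fin n)) (t : ℝ) (ht : 0 ≤ t) :
    ‖S t x - S t y‖ ≥ ‖x - y‖ * Real.exp (-∫ s in (0:ℝ)..t, lam s) := by
  have hderiv : ∀ u, 0 ≤ u → HasDerivAt (fun u => S u x - S u y)
      (gradient (V u) (S u x) - gradient (V u) (S u y)) u :=
    fun u hu => (hSdiff x u hu).sub (hSdiff y u hu)
  have h := norm_mul_exp_neg_integral_le ht
    (fun u hu => (hderiv u hu.1).continuousAt.continuousWithinAt)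
    (fun u hu => (hderiv u hu.1.le).hasDerivWithinAt) (hlam.mono_set Icc_subset_Ici_self)
    (fun u hu => neg_mul_norm_sq_le_inner_gradient_sub (hVdiff u hu.1.le) (hVconv u hu.1.le) _ _)
  simpa [hS0] using h
end

section
/- If f: ℝⁿ → (0,∞) is bounded below by m > 0 and satisfies D²f ≤ C·Id (as quadratic forms), then f_t = P_t f satisfies D²(−log f_t) ≥ −(C e^{−2t}/m)·Id for every t ≥ 0; i.e., f_t is −(C e^{−2t}/m)-log-concave. -/
open MeasureTheory

/-- The standard Gaussian measure on ℝⁿ. -/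
noncomputable def stdGaussian (n : ℕ) : Measure (EuclideanSpace ℝ (Fin n)) :=
  volume.withDensity
    (fun x => ENNReal.ofReal ((2 * Real.pi) ^ (-(n : ℝ) / 2) * Real.exp (-‖x‖ ^ 2 / 2)))

/-- The Ornstein–Uhlenbeck semigroup: `P t f x = E[f(e^{-t} x + √(1-e^{-2t}) Z)]`. -/
noncomputable def ouSemigroup (n : ℕ) (t : ℝ) (f : EuclideanSpace ℝ (Fin n) → ℝ)
    (x : EuclideanSpace ℝ (Fin n)) : ℝ :=
  ∫ z, f (Real.exp (-t) • x + Real.sqrt (1 - Real.exp (-2 * t)) • z) ∂(stdGaussian n)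

/-!
The Hessian bound makes `f` semiconcave: `f (p + u) ≤ f p + ⟪∇f p, u⟫ + C‖u‖²/2`. Taking
expectations in Mehler's formula `P_t f x = E f(e^{-t} x + √(1 - e^{-2t}) Z)` shows that `P_t f` is
semiconcave with constant `C e^{-2t}`, with supergradient `e^{-t} E ∇f(…)` at each point (the
quadratic growth of `f` and `∇f`, forced by `f ≥ m`, makes everything Gaussian-integrable). Since
`P_t f ≥ m`, the inequality `log y ≤ y - 1` turns the quadratic upper support of `P_t f` at `a`
into one of `log P_t f` whose curvature is divided by `P_t f a ≥ m`; a function with a supporting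
affine majorant at every point is concave.
-/

open Real Set
open scoped RealInnerProductSpace

section Semiconcave

variable {E : Type*} [NormedAddCommGroup E] [InnerProductSpace ℝ E]

def SemiconcaveWith (K : ℝ) (φ : E → ℝ) : Prop :=
  ∀ a, ∃ w : E, ∀ x, φ x ≤ φ a + ⟪w, x - a⟫ + K * ‖x - a‖ ^ 2 / 2

theorem concaveOn_univ_of_forall_exists_le_inner {g : E → ℝ}
    (h : ∀ a, ∃ w : E, ∀ x, g x ≤ g a + ⟪w, x - a⟫) : ConcaveOn ℝ univ g := by
  refine ⟨convex_univ, fun x _ y _ α β hα hβ hαβ => ?_⟩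
  set p := α • x + β • y
  obtain ⟨w, hw⟩ := h p
  have hbary : α • (x - p) + β • (y - p) = 0 := by
    rw [smul_sub, smul_sub, sub_add_sub_comm, ← add_smul, hαβ, one_smul, sub_self]
  calc α • g x + β • g y
      ≤ α * (g p + ⟪w, x - p⟫) + β * (g p + ⟪w, y - p⟫) :=
        add_le_add (mul_le_mul_of_nonneg_left (hw x) hα) (mul_le_mul_of_nonneg_left (hw y) hβ)
    _ = (α + β) * g p + ⟪w, α • (x - p) + β • (y - p)⟫ := by
        rw [inner_add_right, real_inner_smul_right, real_inner_smul_right]; ring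
    _ = g p := by rw [hαβ, hbary, inner_zero_right]; ring

theorem SemiconcaveWith.nonneg [Nontrivial E] {K m : ℝ} {φ : E → ℝ}
    (hφ : SemiconcaveWith K φ) (hlower : ∀ x, m ≤ φ x) : 0 ≤ K := by
  obtain ⟨w, hw⟩ := hφ 0
  by_contra! hK
  obtain ⟨u, hu⟩ := exists_norm_eq E (sqrt_nonneg (2 * (φ 0 - m + 1) / -K))
  have hsq : K * ‖u‖ ^ 2 = -(2 * (φ 0 - m + 1)) := by
    rw [hu, sq_sqrt (div_nonneg (by linarith [hlower 0]) (by linarith))]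
    field_simp [hK.ne]
  -- the supporting inequalities at `u` and `-u` cancel the linear term
  have hplus := hw u
  have hminus := hw (-u)
  simp only [sub_zero, inner_neg_right, norm_neg] at hplus hminus
  linarith [hlower u, hlower (-u)]

theorem SemiconcaveWith.concaveOn_log_sub {K m : ℝ} {φ : E → ℝ}
    (hφ : SemiconcaveWith K φ) (hm : 0 < m) (hlower : ∀ x, m ≤ φ x) :
    ConcaveOn ℝ univ (fun x => log (φ x) - K / m * ‖x‖ ^ 2 / 2) := by
  refine concaveOn_univ_of_forall_exists_le_inner fun a => ?_
  rcases subsingleton_or_nontrivial E with hE | hE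
  · exact ⟨0, fun x => by rw [Subsingleton.elim x a]; simp⟩
  have hK : 0 ≤ K := hφ.nonneg hlower
  obtain ⟨w, hw⟩ := hφ a
  refine ⟨(φ a)⁻¹ • w - (K / m) • a, fun x => ?_⟩
  have hφa : 0 < φ a := hm.trans_le (hlower a)
  have hφx : 0 < φ x := hm.trans_le (hlower x)
  have hlog : log (φ x) ≤ log (φ a) + (φ x - φ a) / φ a := by
    have := log_le_sub_one_of_pos (div_pos hφx hφa)
    rw [log_div hφx.ne' hφa.ne'] at this
    rw [sub_div, div_self hφa.ne']
    linarith
  have hquad : (φ x - φ a) / φ a ≤ ⟪w, x - a⟫ / φ a + K / m * ‖x - a‖ ^ 2 / 2 := by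
    calc (φ x - φ a) / φ a ≤ (⟪w, x - a⟫ + K * ‖x - a‖ ^ 2 / 2) / φ a := by
          gcongr; linarith [hw x]
      _ = ⟪w, x - a⟫ / φ a + (K * ‖x - a‖ ^ 2 / 2) / φ a := add_div _ _ _
      _ ≤ ⟪w, x - a⟫ / φ a + (K * ‖x - a‖ ^ 2 / 2) / m := by
          gcongr; exact hlower a
      _ = ⟪w, x - a⟫ / φ a + K / m * ‖x - a‖ ^ 2 / 2 := by ring
  have hexpand : ‖x‖ ^ 2 = ‖a‖ ^ 2 + 2 * ⟪a, x - a⟫ + ‖x - a‖ ^ 2 := by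
    rw [← norm_add_sq_real, add_sub_cancel]
  rw [inner_sub_left, real_inner_smul_left, real_inner_smul_left, hexpand, ← div_eq_inv_mul]
  linarith

end Semiconcave

section Hessian

variable {E : Type*} [NormedAddCommGroup E] [InnerProductSpace ℝ E] [CompleteSpace E]
  {f : E → ℝ}

theorem ContDiff.gradient {n : WithTop ℕ∞} (hf : ContDiff ℝ (n + 1) f) :
    ContDiff ℝ n (gradient f) :=
  (InnerProductSpace.toDual ℝ E).symm.contDiff.comp (hf.fderiv_right le_rfl)

theorem apply_add_le_of_inner_fderiv_gradient_le (hf : ContDiff ℝ 2 f) {C : ℝ}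
    (hhess : ∀ x v, ⟪v, fderiv ℝ (gradient f) x v⟫ ≤ C * ‖v‖ ^ 2) (p u : E) :
    f (p + u) ≤ f p + ⟪gradient f p, u⟫ + C * ‖u‖ ^ 2 / 2 := by
  have hline (s : ℝ) : HasDerivAt (fun s : ℝ => p + s • u) u s := by
    simpa using ((hasDerivAt_id s).smul_const u).const_add p
  have hd1 (s : ℝ) : HasDerivAt (fun s => f (p + s • u)) (fderiv ℝ f (p + s • u) u) s :=
    ((hf.differentiable two_ne_zero) _).hasFDerivAt.comp_hasDerivAt s (hline s)
  have hd2 (s : ℝ) : HasDerivAt (fun s => fderiv ℝ f (p + s • u) u)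
      ⟪fderiv ℝ (gradient f) (p + s • u) u, u⟫ s := by
    have hgd := ((hf.gradient (n := 1)).differentiable one_ne_zero (p + s • u)).hasFDerivAt
    have := (hgd.comp_hasDerivAt s (hline s)).inner ℝ (hasDerivAt_const s u)
    simpa only [Function.comp_def, inner_gradient_left, inner_zero_right, zero_add] using this
  -- `s ↦ C‖u‖²s²/2 - f (p + s • u)` is convex, so it lies above its tangent at `0`
  set q : ℝ → ℝ := fun s => C * ‖u‖ ^ 2 / 2 * s ^ 2 - f (p + s • u)
  have hq (s : ℝ) : HasDerivAt q (C * ‖u‖ ^ 2 * s - fderiv ℝ f (p + s • u) u) s := by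
    refine (((hasDerivAt_pow 2 s).const_mul (C * ‖u‖ ^ 2 / 2)).sub (hd1 s)).congr_deriv ?_
    norm_num; ring
  have hq' (s : ℝ) : HasDerivAt (fun s => C * ‖u‖ ^ 2 * s - fderiv ℝ f (p + s • u) u)
      (C * ‖u‖ ^ 2 - ⟪fderiv ℝ (gradient f) (p + s • u) u, u⟫) s := by
    have := ((hasDerivAt_id' s).const_mul (C * ‖u‖ ^ 2)).sub (hd2 s)
    rwa [mul_one] at this
  have hconvex : ConvexOn ℝ univ q := by
    refine convexOn_of_hasDerivWithinAt2_nonneg convex_univ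
      (fun s _ => (hq s).continuousAt.continuousWithinAt) (fun s _ => (hq s).hasDerivWithinAt)
      (fun s _ => (hq' s).hasDerivWithinAt) fun s _ => ?_
    have := hhess (p + s • u) u
    rw [real_inner_comm] at this
    linarith
  have htangent := hconvex.le_slope_of_hasDerivAt (mem_univ 0) (mem_univ 1) one_pos (hq 0)
  simp only [slope_def_field, q] at htangent
  norm_num at htangent
  rw [inner_gradient_left]
  linarith

end Hessian

section QuadraticGrowth

variable {E F : Type*} [SeminormedAddCommGroup E] [SeminormedAddCommGroup F]

def HasQuadraticGrowth (g : E → F) : Prop :=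
  ∃ c, ∀ z, ‖g z‖ ≤ c * (1 + ‖z‖ ^ 2)

theorem nonneg_of_forall_norm_le_mul_one_add_sq {g : E → F} {c : ℝ}
    (hc : ∀ z, ‖g z‖ ≤ c * (1 + ‖z‖ ^ 2)) : 0 ≤ c := by
  simpa using (norm_nonneg (g 0)).trans (hc 0)

theorem HasQuadraticGrowth.comp_add_smul [NormedSpace ℝ E] {g : E → F}
    (hg : HasQuadraticGrowth g) (y : E) (σ : ℝ) :
    HasQuadraticGrowth (fun z => g (y + σ • z)) := by
  obtain ⟨c, hc⟩ := hg
  have hc0 := nonneg_of_forall_norm_le_mul_one_add_sq hc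
  refine ⟨c * (1 + 2 * ‖y‖ ^ 2 + 2 * σ ^ 2), fun z => ?_⟩
  have hnorm : ‖y + σ • z‖ ^ 2 ≤ 2 * ‖y‖ ^ 2 + 2 * σ ^ 2 * ‖z‖ ^ 2 := by
    have := norm_add_le y (σ • z)
    rw [norm_smul, norm_eq_abs] at this
    nlinarith [sq_nonneg (‖y‖ - |σ| * ‖z‖), sq_abs σ, norm_nonneg (y + σ • z)]
  calc ‖g (y + σ • z)‖ ≤ c * (1 + ‖y + σ • z‖ ^ 2) := hc _
    _ ≤ c * ((1 + 2 * ‖y‖ ^ 2 + 2 * σ ^ 2) * (1 + ‖z‖ ^ 2)) := by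
        gcongr
        nlinarith [sq_nonneg ‖y‖, sq_nonneg σ, sq_nonneg ‖z‖,
          mul_nonneg (sq_nonneg ‖y‖) (sq_nonneg ‖z‖)]
    _ = c * (1 + 2 * ‖y‖ ^ 2 + 2 * σ ^ 2) * (1 + ‖z‖ ^ 2) := by ring

end QuadraticGrowth

section QuadraticUpperBound

variable {E : Type*} [NormedAddCommGroup E] [InnerProductSpace ℝ E] {f : E → ℝ} {g : E → E}
  {C m : ℝ} (htay : ∀ p u, f (p + u) ≤ f p + ⟪g p, u⟫ + C * ‖u‖ ^ 2 / 2)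
include htay

theorem norm_le_of_forall_apply_add_le (hlower : ∀ x, m ≤ f x) (p : E) :
    ‖g p‖ ≤ f p - m + |C| / 2 := by
  set u := -(‖g p‖⁻¹ • g p)
  have hu : ‖u‖ ≤ 1 := by
    rw [norm_neg, norm_smul, norm_inv, norm_norm]
    exact inv_mul_le_one
  have hinner : ⟪g p, u⟫ = -‖g p‖ := by
    rw [inner_neg_right, real_inner_smul_right, real_inner_self_eq_norm_sq]
    rcases eq_or_ne ‖g p‖ 0 with h | h
    · simp [h]
    · field_simp
  have hCu : C * ‖u‖ ^ 2 ≤ |C| :=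
    calc C * ‖u‖ ^ 2 ≤ |C| * ‖u‖ ^ 2 := by gcongr; exact le_abs_self C
      _ ≤ |C| := mul_le_of_le_one_right (abs_nonneg C) (pow_le_one₀ (norm_nonneg u) hu)
  linarith [htay p u, hlower (p + u)]

theorem apply_le_of_forall_apply_add_le (p : E) :
    f p ≤ (|f 0| + ‖g 0‖ + |C|) * (1 + ‖p‖ ^ 2) := by
  have h := htay 0 p
  rw [zero_add] at h
  have hinner : ⟪g 0, p⟫ ≤ ‖g 0‖ * (1 + ‖p‖ ^ 2) :=
    (real_inner_le_norm _ _).trans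
      (by gcongr; nlinarith [sq_nonneg (‖p‖ - 1)])
  have hC : C * ‖p‖ ^ 2 / 2 ≤ |C| * (1 + ‖p‖ ^ 2) := by
    nlinarith [le_abs_self C, abs_nonneg C, sq_nonneg ‖p‖]
  nlinarith [le_abs_self (f 0), abs_nonneg (f 0), sq_nonneg ‖p‖]

theorem hasQuadraticGrowth_of_forall_apply_add_le (hlower : ∀ x, m ≤ f x) :
    HasQuadraticGrowth f := by
  refine ⟨|f 0| + ‖g 0‖ + |C| + 2 * |m|, fun p => ?_⟩
  have hf := apply_le_of_forall_apply_add_le htay p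
  rw [norm_eq_abs, abs_le]
  constructor <;> nlinarith [hlower p, le_abs_self m, neg_abs_le m, sq_nonneg ‖p‖]

theorem hasQuadraticGrowth_supergradient_of_forall_apply_add_le (hlower : ∀ x, m ≤ f x) :
    HasQuadraticGrowth g := by
  refine ⟨|f 0| + ‖g 0‖ + |C| + |m| + |C|, fun p => ?_⟩
  have hf := apply_le_of_forall_apply_add_le htay p
  have hg := norm_le_of_forall_apply_add_le htay hlower p
  nlinarith [neg_abs_le m, abs_nonneg C, abs_nonneg m, sq_nonneg ‖p‖]

end QuadraticUpperBound

section Gaussian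

theorem integrable_exp_neg_mul_sq_norm {V : Type*} [NormedAddCommGroup V]
    [InnerProductSpace ℝ V] [FiniteDimensional ℝ V] [MeasurableSpace V] [BorelSpace V]
    {b : ℝ} (hb : 0 < b) : Integrable (fun v : V => exp (-b * ‖v‖ ^ 2)) := by
  have h := (GaussianFourier.integrable_cexp_neg_mul_sq_norm_add (V := V) (b := (b : ℂ))
    (by simpa using hb) 0 0).norm
  refine h.congr (Filter.Eventually.of_forall fun v => ?_)
  simp only [zero_mul, add_zero, Complex.norm_exp]
  norm_cast

theorem one_add_mul_exp_neg_half_le (s : ℝ) : (1 + s) * exp (-s / 2) ≤ 4 * exp (-s / 4) :=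
  calc (1 + s) * exp (-s / 2) ≤ 4 * exp (s / 4) * exp (-s / 2) := by
        gcongr; linarith [add_one_le_exp (s / 4)]
    _ = 4 * exp (-s / 4) := by rw [mul_assoc, ← exp_add]; ring_nf

variable {n : ℕ}

instance isProbabilityMeasure_stdGaussian : IsProbabilityMeasure (stdGaussian n) where
  measure_univ := by
    have hint : Integrable (fun x : EuclideanSpace ℝ (Fin n) => exp (-2⁻¹ * ‖x‖ ^ 2)) :=
      integrable_exp_neg_mul_sq_norm (by norm_num)
    have hdensity (x : EuclideanSpace ℝ (Fin n)) :
        (2 * π) ^ (-(n : ℝ) / 2) * exp (-‖x‖ ^ 2 / 2)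
          = (2 * π) ^ (-(n : ℝ) / 2) * exp (-2⁻¹ * ‖x‖ ^ 2) := by ring_nf
    rw [stdGaussian, withDensity_apply _ MeasurableSet.univ, Measure.restrict_univ]
    simp_rw [hdensity]
    rw [← ofReal_integral_eq_lintegral_ofReal (hint.const_mul _)
      (Filter.Eventually.of_forall fun x => by positivity), integral_const_mul,
      GaussianFourier.integral_rexp_neg_mul_sq_norm (by norm_num), finrank_euclideanSpace_fin,
      show π / 2⁻¹ = 2 * π by ring, ← rpow_add (by positivity), neg_div, neg_add_cancel,
      rpow_zero, ENNReal.ofReal_one]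

theorem HasQuadraticGrowth.integrable_stdGaussian {F : Type*} [NormedAddCommGroup F]
    [NormedSpace ℝ F] {g : EuclideanSpace ℝ (Fin n) → F} (hg : HasQuadraticGrowth g)
    (hmeas : AEStronglyMeasurable g) : Integrable g (stdGaussian n) := by
  obtain ⟨c, hc⟩ := hg
  have hc0 := nonneg_of_forall_norm_le_mul_one_add_sq hc
  have hρ : Measurable fun x : EuclideanSpace ℝ (Fin n) =>
      ENNReal.ofReal ((2 * π) ^ (-(n : ℝ) / 2) * exp (-‖x‖ ^ 2 / 2)) := by fun_prop
  rw [stdGaussian, integrable_withDensity_iff_integrable_smul' hρ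
    (Filter.Eventually.of_forall fun _ => ENNReal.ofReal_lt_top)]
  refine ((integrable_exp_neg_mul_sq_norm (V := EuclideanSpace ℝ (Fin n))
    (by norm_num : (0 : ℝ) < 4⁻¹)).const_mul (4 * c * (2 * π) ^ (-(n : ℝ) / 2))).mono'
    (hρ.ennreal_toReal.aestronglyMeasurable.smul hmeas) (Filter.Eventually.of_forall fun z => ?_)
  rw [ENNReal.toReal_ofReal (by positivity), norm_smul, norm_of_nonneg (by positivity)]
  calc (2 * π) ^ (-(n : ℝ) / 2) * exp (-‖z‖ ^ 2 / 2) * ‖g z‖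
      ≤ (2 * π) ^ (-(n : ℝ) / 2) * exp (-‖z‖ ^ 2 / 2) * (c * (1 + ‖z‖ ^ 2)) := by
        gcongr; exact hc z
    _ = c * (2 * π) ^ (-(n : ℝ) / 2) * ((1 + ‖z‖ ^ 2) * exp (-‖z‖ ^ 2 / 2)) := by ring
    _ ≤ c * (2 * π) ^ (-(n : ℝ) / 2) * (4 * exp (-‖z‖ ^ 2 / 4)) := by
        gcongr ?_ * ?_
        exact one_add_mul_exp_neg_half_le _
    _ = 4 * c * (2 * π) ^ (-(n : ℝ) / 2) * exp (-4⁻¹ * ‖z‖ ^ 2) := by ring_nf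

end Gaussian

section Averaging

variable {E Ω : Type*} [NormedAddCommGroup E] [InnerProductSpace ℝ E] [CompleteSpace E]
  [MeasurableSpace Ω] {μ : Measure Ω} [IsProbabilityMeasure μ]

theorem semiconcaveWith_integral_apply_smul_add {f : E → ℝ} {g : E → E} {C : ℝ}
    (htay : ∀ p u, f (p + u) ≤ f p + ⟪g p, u⟫ + C * ‖u‖ ^ 2 / 2) (r : ℝ) (h : Ω → E)
    (hf : ∀ y, Integrable (fun z => f (y + h z)) μ)
    (hg : ∀ y, Integrable (fun z => g (y + h z)) μ) :
    SemiconcaveWith (C * r ^ 2) (fun x => ∫ z, f (r • x + h z) ∂μ) := by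
  intro a
  refine ⟨r • ∫ z, g (r • a + h z) ∂μ, fun x => ?_⟩
  have hpt (z : Ω) : f (r • x + h z) ≤ f (r • a + h z) + ⟪r • (x - a), g (r • a + h z)⟫
      + C * r ^ 2 * ‖x - a‖ ^ 2 / 2 := by
    have := htay (r • a + h z) (r • (x - a))
    rw [show r • a + h z + r • (x - a) = r • x + h z by module, real_inner_comm, norm_smul,
      mul_pow, norm_eq_abs, sq_abs] at this
    linarith
  have hint : Integrable (fun z => f (r • a + h z) + ⟪r • (x - a), g (r • a + h z)⟫) μ :=
    (hf (r • a)).add ((hg (r • a)).const_inner (r • (x - a)))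
  calc ∫ z, f (r • x + h z) ∂μ
      ≤ ∫ z, (f (r • a + h z) + ⟪r • (x - a), g (r • a + h z)⟫
          + C * r ^ 2 * ‖x - a‖ ^ 2 / 2) ∂μ :=
        integral_mono (hf _) (hint.add (integrable_const _)) hpt
    _ = (∫ z, f (r • a + h z) ∂μ) + ⟪r • ∫ z, g (r • a + h z) ∂μ, x - a⟫
          + C * r ^ 2 * ‖x - a‖ ^ 2 / 2 := by
        rw [integral_add hint (integrable_const _),
          integral_add (hf _) ((hg _).const_inner _), integral_inner (hg _), integral_const,
          probReal_univ, one_smul, real_inner_smul_left, real_inner_smul_left, real_inner_comm]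

end Averaging

theorem stmt_10_general (n : ℕ) (f : EuclideanSpace ℝ (Fin n) → ℝ)
    (hf : ContDiff ℝ 2 f) (m : ℝ) (hm : 0 < m) (hlower : ∀ x, m ≤ f x)
    (C : ℝ)
    (hhess : ∀ x v, inner ℝ v (fderiv ℝ (gradient f) x v) ≤ C * ‖v‖ ^ 2)
    (t : ℝ) :
    ConcaveOn ℝ Set.univ
      (fun x => Real.log (ouSemigroup n t f x) -
        (C * Real.exp (-2 * t) / m) * ‖x‖ ^ 2 / 2) := by
  have htay := apply_add_le_of_inner_fderiv_gradient_le hf hhess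
  set σ := √(1 - exp (-2 * t))
  have hf_int (y) : Integrable (fun z => f (y + σ • z)) (stdGaussian n) :=
    ((hasQuadraticGrowth_of_forall_apply_add_le htay hlower).comp_add_smul y σ)
      |>.integrable_stdGaussian (by fun_prop)
  have hg_int (y) : Integrable (fun z => gradient f (y + σ • z)) (stdGaussian n) :=
    ((hasQuadraticGrowth_supergradient_of_forall_apply_add_le htay hlower).comp_add_smul y σ)
      |>.integrable_stdGaussian
        ((hf.gradient (n := 1)).continuous.comp (by fun_prop)).aestronglyMeasurable
  have hsemi : SemiconcaveWith (C * exp (-2 * t)) (ouSemigroup n t f) := by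
    have := semiconcaveWith_integral_apply_smul_add htay (exp (-t)) (σ • ·) hf_int hg_int
    rwa [← exp_nat_mul, Nat.cast_ofNat, mul_neg, ← neg_mul] at this
  refine hsemi.concaveOn_log_sub hm fun x => le_trans ?_
    (integral_mono (integrable_const m) (hf_int (exp (-t) • x)) fun z => hlower _)
  simp

/-- if `f ≥ m > 0` and `D²f ≤ C·Id`, then `P_t f` is
`-(C e^{-2t}/m)`-log-concave, i.e. `log P_t f - (C e^{-2t}/m)|x|²/2` is concave. -/
theorem stmt_10 (n : ℕ) (f : EuclideanSpace ℝ (Fin n) → ℝ)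
    (hf : ContDiff ℝ 2 f) (m : ℝ) (hm : 0 < m) (hlower : ∀ x, m ≤ f x)
    (C : ℝ)
    (hhess : ∀ x v, inner ℝ v (fderiv ℝ (gradient f) x v) ≤ C * ‖v‖ ^ 2)
    (t : ℝ) (ht : 0 ≤ t) :
    ConcaveOn ℝ Set.univ
      (fun x => Real.log (ouSemigroup n t f x) -
        (C * Real.exp (-2 * t) / m) * ‖x‖ ^ 2 / 2) :=
  stmt_10_general n f hf m hm hlower C hhess t
end

section
/- Let V: ℝ → ℝ be defined by V(x) = c for x < 1 and V(x) = c − (x−1)²/2 for x ≥ 1, where c is chosen so that ∫ e^{−V} dγ = 1. Then V'' ≥ −1, sup V < ∞, but the measure e^{−V} dγ has tails satisfying Pr(X ≥ x) ≥ C·e^{−x} for some C > 0 and all large x, and hence e^{−V} dγ is not the push-forward of γ under any Lipschitz map. -/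
/-!
For `x ≥ 1` the factor `e^{(x-1)²/2}` of the density cancels the Gaussian `e^{-x²/2}` up to a
factor `e^{-x}`, so `e^{-V} dγ` has an exact exponential tail `C e^{-x}`. On the other hand, if `T`
is `K`-Lipschitz then `T y ≥ T 0 + K t` forces `|y| ≥ t`, so by the Chernoff bound the push-forward
of `γ` under `T` gives `[T 0 + K t, ∞)` mass at most `2 e^{-t²/2}`, which is eventually smaller
than `C e^{-(T 0 + K t)}`. Convexity of `V + x²/2` comes from writing it as
`c - 1/2 + x + ((1 - x)⁺)²/2`.
-/

open MeasureTheory ProbabilityTheory Real Set Filter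
open scoped NNReal

lemma hasSubgaussianMGF_id_gaussianReal (v : ℝ≥0) :
    HasSubgaussianMGF id v (gaussianReal 0 v) where
  integrable_exp_mul := integrable_exp_mul_gaussianReal
  mgf_le t := by simp [mgf_id_gaussianReal]

lemma gaussianReal_real_abs_ge_le {v : ℝ≥0} {t : ℝ} (ht : 0 ≤ t) :
    (gaussianReal 0 v).real {y | t ≤ |y|} ≤ 2 * exp (-t ^ 2 / (2 * v)) := by
  have hsub : {y : ℝ | t ≤ |y|} = {y | t ≤ id y} ∪ {y | t ≤ (-id) y} := by
    ext y; simp only [mem_ofPred_eq, mem_union, le_abs, id, Pi.neg_apply]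
  calc (gaussianReal 0 v).real {y | t ≤ |y|}
      ≤ (gaussianReal 0 v).real {y | t ≤ id y} + (gaussianReal 0 v).real {y | t ≤ (-id) y} :=
        hsub ▸ measureReal_union_le _ _
    _ ≤ exp (-t ^ 2 / (2 * v)) + exp (-t ^ 2 / (2 * v)) := by
        gcongr
        · exact (hasSubgaussianMGF_id_gaussianReal v).measure_ge_le ht
        · exact (hasSubgaussianMGF_id_gaussianReal v).neg.measure_ge_le ht
    _ = 2 * exp (-t ^ 2 / (2 * v)) := by ring

lemma LipschitzWith.map_Ici_add_mul_le {μ : Measure ℝ} {K : ℝ≥0} {T : ℝ → ℝ}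
    (hT : LipschitzWith K T) (hK : 0 < K) (t : ℝ) :
    μ.map T (Ici (T 0 + K * t)) ≤ μ {y | t ≤ |y|} := by
  rw [Measure.map_apply hT.continuous.measurable measurableSet_Ici]
  refine measure_mono fun y (hy : T 0 + K * t ≤ T y) => ?_
  have h := hT.dist_le_mul y 0
  rw [Real.dist_eq, Real.dist_eq, sub_zero] at h
  exact le_of_mul_le_mul_left (show (K : ℝ) * t ≤ K * |y| by linarith [le_abs_self (T y - T 0)])
    (by exact_mod_cast hK)

lemma eventually_two_mul_exp_lt_mul_exp {C : ℝ} (hC : 0 < C) (a K : ℝ) :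
    ∀ᶠ t in atTop, 2 * exp (-t ^ 2 / 2) < C * exp (-(a + K * t)) := by
  have hquad : Tendsto (fun t : ℝ => t ^ 2 / 2 - a - K * t) atTop atTop := by
    have h := (tendsto_id.atTop_mul_atTop₀
      (tendsto_atTop_add_const_right _ (-K) (tendsto_id.atTop_div_const two_pos)))
    refine tendsto_atTop_add_const_right _ (-a) h |>.congr fun t => ?_
    simp only [id]; ring
  filter_upwards [(tendsto_exp_atTop.comp hquad).eventually_gt_atTop (2 / C)] with t ht
  rw [Function.comp_apply, div_lt_iff₀ hC] at ht
  calc 2 * exp (-t ^ 2 / 2) < exp (t ^ 2 / 2 - a - K * t) * C * exp (-t ^ 2 / 2) := by gcongr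
    _ = C * exp (-(a + K * t)) := by
      rw [mul_comm _ C, mul_assoc, ← exp_add]; ring_nf

theorem LipschitzWith.map_gaussianReal_ne_of_exp_le_measure_Ici {ν : Measure ℝ} {C x₀ : ℝ}
    (hC : 0 < C) (htail : ∀ x ≥ x₀, ENNReal.ofReal (C * exp (-x)) ≤ ν (Ici x))
    {L : ℝ≥0} {T : ℝ → ℝ} (hT : LipschitzWith L T) : (gaussianReal 0 1).map T ≠ ν := by
  rintro rfl
  -- `L` may be `0`, so pass to the positive constant `L + 1`.
  have hK : LipschitzWith (L + 1) T := hT.weaken le_self_add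
  have hK₀ : (0 : ℝ) < (L + 1 : ℝ≥0) := by positivity
  have hx : Tendsto (fun t => T 0 + (L + 1 : ℝ≥0) * t) atTop atTop :=
    tendsto_atTop_add_const_left _ (T 0) (tendsto_id.const_mul_atTop hK₀)
  obtain ⟨t, ht₀, hx₀, hlt⟩ := ((eventually_ge_atTop 0).and ((hx.eventually_ge_atTop x₀).and
    (eventually_two_mul_exp_lt_mul_exp hC (T 0) (L + 1 : ℝ≥0)))).exists
  have hle : ENNReal.ofReal (C * exp (-(T 0 + (L + 1 : ℝ≥0) * t)))
      ≤ ENNReal.ofReal (2 * exp (-t ^ 2 / 2)) := calc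
    _ ≤ (gaussianReal 0 1).map T (Ici (T 0 + (L + 1 : ℝ≥0) * t)) := htail _ hx₀
    _ ≤ gaussianReal 0 1 {y | t ≤ |y|} := hK.map_Ici_add_mul_le (by positivity) t
    _ = ENNReal.ofReal ((gaussianReal 0 1).real {y | t ≤ |y|}) := (ofReal_measureReal).symm
    _ ≤ ENNReal.ofReal (2 * exp (-t ^ 2 / 2)) := by
      gcongr
      simpa using gaussianReal_real_abs_ge_le (v := 1) ht₀
  exact hlt.not_ge ((ENNReal.ofReal_le_ofReal_iff (by positivity)).1 hle)

noncomputable def parabolicPotential (c x : ℝ) : ℝ := if x < 1 then c else c - (x - 1) ^ 2 / 2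

lemma parabolicPotential_add_sq_div_two (c x : ℝ) :
    parabolicPotential c x + x ^ 2 / 2 = c - 1 / 2 + x + max (1 - x) 0 ^ 2 / 2 := by
  unfold parabolicPotential
  split_ifs with hx
  · rw [max_eq_left (by linarith)]; ring
  · rw [max_eq_right (by linarith)]; ring

lemma convexOn_parabolicPotential_add_sq_div_two (c : ℝ) :
    ConvexOn ℝ univ (fun x => parabolicPotential c x + x ^ 2 / 2) := by
  simp only [parabolicPotential_add_sq_div_two]
  have hpos : ConvexOn ℝ univ (fun x : ℝ => max (1 - x) 0) :=
    ((convexOn_const 1 convex_univ).sub (concaveOn_id convex_univ)).sup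
      (convexOn_const 0 convex_univ)
  have hsq := hpos.pow (fun x _ => le_max_right _ _) 2
  refine (((convexOn_id convex_univ).add (hsq.smul (by norm_num : (0 : ℝ) ≤ 1 / 2))).add
    (convexOn_const (c - 1 / 2) convex_univ)).congr fun x _ => ?_
  simp only [id, Pi.add_apply, Pi.pow_apply, smul_eq_mul]
  ring

lemma parabolicPotential_le (c x : ℝ) : parabolicPotential c x ≤ c := by
  unfold parabolicPotential
  split_ifs
  · exact le_rfl
  · linarith [sq_nonneg (x - 1)]

lemma gaussianPDFReal_mul_exp_neg_parabolicPotential (c : ℝ) {y : ℝ} (hy : 1 ≤ y) :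
    gaussianPDFReal 0 1 y * exp (-parabolicPotential c y)
      = (√(2 * π))⁻¹ * exp (1 / 2 - c) * exp (-y) := by
  simp only [parabolicPotential, if_neg hy.not_gt, gaussianPDFReal, NNReal.coe_one, mul_one,
    mul_assoc, ← exp_add]
  congr 2
  ring

lemma withDensity_parabolicPotential_Ici (c : ℝ) {x : ℝ} (hx : 1 ≤ x) :
    (gaussianReal 0 1).withDensity (fun y => ENNReal.ofReal (exp (-parabolicPotential c y))) (Ici x)
      = ENNReal.ofReal ((√(2 * π))⁻¹ * exp (1 / 2 - c) * exp (-x)) := by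
  have hV : Measurable (parabolicPotential c) :=
    Measurable.ite measurableSet_Iio measurable_const (by fun_prop)
  rw [withDensity_apply _ measurableSet_Ici, gaussianReal_of_var_ne_zero 0 one_ne_zero,
    restrict_withDensity measurableSet_Ici, lintegral_withDensity_eq_lintegral_mul _
      (measurable_gaussianPDF 0 1) (by fun_prop)]
  have hdens : ∀ y ∈ Ici x,
      (gaussianPDF 0 1 * fun y => ENNReal.ofReal (exp (-parabolicPotential c y))) y
        = ENNReal.ofReal ((√(2 * π))⁻¹ * exp (1 / 2 - c) * exp (-y)) := fun y hy => by
    rw [Pi.mul_apply, gaussianPDF, ← ENNReal.ofReal_mul (gaussianPDFReal_nonneg 0 1 y),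
      gaussianPDFReal_mul_exp_neg_parabolicPotential c (hx.trans hy)]
  rw [setLIntegral_congr_fun measurableSet_Ici hdens, ← ofReal_integral_eq_lintegral_ofReal
      (((integrableOn_Ici_iff_integrableOn_Ioi (by simp)).2
        (integrableOn_exp_neg_Ioi x)).const_mul _)
    (ae_of_all _ fun y => by positivity), integral_Ici_eq_integral_Ioi, integral_const_mul,
    integral_exp_neg_Ioi]

theorem stmt_18_general (c : ℝ) (V : ℝ → ℝ)
    (hV : ∀ x, V x = if x < 1 then c else c - (x - 1) ^ 2 / 2)
    (μ : Measure ℝ)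
    (hμ : μ = (gaussianReal 0 1).withDensity (fun x => ENNReal.ofReal (Real.exp (-V x)))) :
    ConvexOn ℝ Set.univ (fun x => V x + x ^ 2 / 2) ∧
    BddAbove (Set.range V) ∧
    (∃ C > 0, ∃ x₀ : ℝ, ∀ x ≥ x₀, ENNReal.ofReal (C * Real.exp (-x)) ≤ μ (Set.Ici x)) ∧
    ¬ ∃ (L : NNReal) (T : ℝ → ℝ), LipschitzWith L T ∧ (gaussianReal 0 1).map T = μ := by
  obtain rfl : V = parabolicPotential c := funext hV
  have htail : ∀ x ≥ 1, ENNReal.ofReal ((√(2 * π))⁻¹ * exp (1 / 2 - c) * exp (-x)) ≤ μ (Ici x) :=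
    fun x hx => hμ ▸ (withDensity_parabolicPotential_Ici c hx).ge
  refine ⟨convexOn_parabolicPotential_add_sq_div_two c,
    ⟨c, forall_mem_range.2 (parabolicPotential_le c)⟩, ⟨_, by positivity, 1, htail⟩, ?_⟩
  rintro ⟨L, T, hT, hmap⟩
  exact hT.map_gaussianReal_ne_of_exp_le_measure_Ici (by positivity) htail hmap

/-- the potential `V(x) = c` for `x < 1`, `V(x) = c - (x-1)²/2` for
`x ≥ 1` (with `c` normalizing `e^{-V} dγ` to a probability measure) satisfies
`V'' ≥ -1` and `sup V < ∞`, but `e^{-V} dγ` has tails `≥ C e^{-x}`, hence it is not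
the push-forward of `γ` under any Lipschitz map. -/
theorem stmt_18 (c : ℝ) (V : ℝ → ℝ)
    (hV : ∀ x, V x = if x < 1 then c else c - (x - 1) ^ 2 / 2)
    (hnorm : ∫ x, Real.exp (-V x) ∂(gaussianReal 0 1) = 1)
    (μ : Measure ℝ)
    (hμ : μ = (gaussianReal 0 1).withDensity (fun x => ENNReal.ofReal (Real.exp (-V x)))) :
    ConvexOn ℝ Set.univ (fun x => V x + x ^ 2 / 2) ∧
    BddAbove (Set.range V) ∧
    (∃ C > 0, ∃ x₀ : ℝ, ∀ x ≥ x₀, ENNReal.ofReal (C * Real.exp (-x)) ≤ μ (Set.Ici x)) ∧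
    ¬ ∃ (L : NNReal) (T : ℝ → ℝ), LipschitzWith L T ∧ (gaussianReal 0 1).map T = μ :=
  stmt_18_general c V hV μ hμ
end

section
/- Suppose f: ℝⁿ → (0,∞) is (−λ)-log-concave for some 0 ≤ λ < 1, f dγ is a probability measure, and Caffarelli's theorem holds (every probability measure log-concave relative to γ is a 1-Lipschitz image of γ). Then f dγ is a (1/√(1−λ))-Lipschitz image of γ. -/
open MeasureTheory

/-!
Put `s = √(1 - λ)`. The dilation `x ↦ s • x` carries `f dγ` to `g dγ` with
`g x = s⁻ⁿ f (x / s) exp ((‖x‖² - ‖x / s‖²) / 2)`, and the Gaussian factor exactly cancels the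
`-λ ‖y‖² / 2` defect of `log f`, so `g` is log-concave. Caffarelli's theorem gives a 1-Lipschitz `T`
with `T_* γ = g dγ`, and then `s⁻¹ • T` pushes `γ` to `f dγ` and is `1 / s`-Lipschitz.
-/

open Real Module Set
open scoped ENNReal

section Dilation

variable {E : Type*} [NormedAddCommGroup E] [NormedSpace ℝ E]

theorem map_smul_withDensity_addHaar [FiniteDimensional ℝ E] [MeasurableSpace E] [BorelSpace E]
    (μ : Measure E) [μ.IsAddHaarMeasure] {c : ℝ} (hc : c ≠ 0) {ψ : E → ℝ≥0∞}
    (hψ : Measurable ψ) :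
    (μ.withDensity ψ).map (c • ·) =
      μ.withDensity fun x => ENNReal.ofReal |c ^ finrank ℝ E|⁻¹ * ψ (c⁻¹ • x) := by
  have hsmul : Measurable fun x : E => c • x := measurable_const_smul c
  have hψ' : Measurable fun x : E => ψ (c⁻¹ • x) := hψ.comp (measurable_const_smul c⁻¹)
  ext s hs
  have hchange : ∫⁻ y in s, ψ (c⁻¹ • y) ∂μ.map (c • ·) = ∫⁻ x in (c • ·) ⁻¹' s, ψ x ∂μ := by
    simp only [setLIntegral_map hs hψ' hsmul, inv_smul_smul₀ hc]
  rw [Measure.map_apply hsmul hs, withDensity_apply _ (hsmul hs), withDensity_apply _ hs,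
    ← hchange, Measure.map_addHaar_smul μ hc, abs_inv, Measure.restrict_smul,
    lintegral_smul_measure, lintegral_const_mul _ hψ', smul_eq_mul]

/-- The density, relative to the standard Gaussian, of the image of `f dγ` under `x ↦ s • x`. -/
noncomputable def dilatedDensity (s : ℝ) (f : E → ℝ) (x : E) : ℝ :=
  (s ^ finrank ℝ E)⁻¹ * exp ((‖x‖ ^ 2 - ‖s⁻¹ • x‖ ^ 2) / 2) * f (s⁻¹ • x)

variable {f : E → ℝ} {s : ℝ}

theorem dilatedDensity_pos (hs : 0 < s) (hpos : ∀ x, 0 < f x) (x : E) :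
    0 < dilatedDensity s f x := by
  have := hpos (s⁻¹ • x)
  unfold dilatedDensity
  positivity

theorem concaveOn_log_dilatedDensity {lam : ℝ} (hs : 0 < s) (hs2 : s ^ 2 = 1 - lam)
    (hpos : ∀ x, 0 < f x)
    (hconc : ConcaveOn ℝ univ fun x => log (f x) - lam * ‖x‖ ^ 2 / 2) :
    ConcaveOn ℝ univ fun x => log (dilatedDensity s f x) := by
  -- with `y = s⁻¹ • x`, `‖x‖² = (1 - λ) ‖y‖²`, so the Gaussian correction is `-λ ‖y‖² / 2`
  have hlog : (fun x => log (dilatedDensity s f x)) = fun x : E =>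
      (log (f (s⁻¹ • x)) - lam * ‖s⁻¹ • x‖ ^ 2 / 2) + log (s ^ finrank ℝ E)⁻¹ := by
    funext x
    have hx : x = s • s⁻¹ • x := (smul_inv_smul₀ hs.ne' x).symm
    have hnorm : ‖x‖ ^ 2 = (1 - lam) * ‖s⁻¹ • x‖ ^ 2 := by
      conv_lhs => rw [hx]
      rw [norm_smul, mul_pow, norm_eq_abs, sq_abs, hs2]
    have := hpos (s⁻¹ • x)
    rw [dilatedDensity, log_mul (by positivity) this.ne', log_mul (by positivity) (exp_pos _).ne',
      log_exp, hnorm]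
    ring
  rw [hlog]
  exact (hconc.comp_linearMap (s⁻¹ • LinearMap.id)).add_const _

theorem continuous_of_concaveOn_log_sub [FiniteDimensional ℝ E] {q : E → ℝ} (hq : Continuous q) (hpos : ∀ x, 0 < f x)
    (hconc : ConcaveOn ℝ univ fun x => log (f x) - q x) : Continuous f := by
  have hlog : Continuous fun x => log (f x) - q x :=
    continuousOn_univ.mp (hconc.continuousOn isOpen_univ)
  have hf : f = fun x => exp ((log (f x) - q x) + q x) := by
    funext x
    rw [sub_add_cancel, exp_log (hpos x)]
  rw [hf]
  fun_prop

end Dilation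

theorem map_smul_stdGaussian_withDensity {n : ℕ} {s : ℝ} (hs : 0 < s)
    {f : EuclideanSpace ℝ (Fin n) → ℝ} (hf : Measurable f) :
    ((stdGaussian n).withDensity fun x => ENNReal.ofReal (f x)).map (s • ·) =
      (stdGaussian n).withDensity fun x => ENNReal.ofReal (dilatedDensity s f x) := by
  set φ : EuclideanSpace ℝ (Fin n) → ℝ := fun x => (2 * π) ^ (-(n : ℝ) / 2) * exp (-‖x‖ ^ 2 / 2)
  have hφ : Measurable fun x => ENNReal.ofReal (φ x) := by fun_prop
  have hγ : ∀ {g : EuclideanSpace ℝ (Fin n) → ℝ}, Measurable g →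
      (stdGaussian n).withDensity (fun x => ENNReal.ofReal (g x)) =
        volume.withDensity fun x => ENNReal.ofReal (φ x * g x) := fun hg => by
    rw [stdGaussian, ← withDensity_mul _ hφ hg.ennreal_ofReal]
    congr 1
    funext x
    exact (ENNReal.ofReal_mul (by positivity)).symm
  have hφ_dilate : ∀ x : EuclideanSpace ℝ (Fin n),
      φ (s⁻¹ • x) = φ x * exp ((‖x‖ ^ 2 - ‖s⁻¹ • x‖ ^ 2) / 2) := fun x => by
    simp only [φ, mul_assoc, ← exp_add]
    congr 2
    ring
  have hg : Measurable (dilatedDensity s f) := by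
    unfold dilatedDensity
    fun_prop
  rw [hγ hf, hγ hg, map_smul_withDensity_addHaar _ hs.ne' (by fun_prop)]
  congr 1
  funext x
  rw [← ENNReal.ofReal_mul (by positivity), abs_of_pos (by positivity), hφ_dilate, dilatedDensity]
  congr 1
  ring

theorem stmt_19_general (n : ℕ)
    (caffarelli : ∀ g : EuclideanSpace ℝ (Fin n) → ℝ, (∀ x, 0 < g x) →
      ConcaveOn ℝ Set.univ (fun x => Real.log (g x)) →
      IsProbabilityMeasure ((stdGaussian n).withDensity (fun x => ENNReal.ofReal (g x))) →
      ∃ T : EuclideanSpace ℝ (Fin n) → EuclideanSpace ℝ (Fin n),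
        LipschitzWith 1 T ∧
        (stdGaussian n).map T =
          (stdGaussian n).withDensity (fun x => ENNReal.ofReal (g x)))
    (f : EuclideanSpace ℝ (Fin n) → ℝ) (hpos : ∀ x, 0 < f x)
    (lam : ℝ) (hlam1 : lam < 1)
    (hconc : ConcaveOn ℝ Set.univ (fun x => Real.log (f x) - lam * ‖x‖ ^ 2 / 2))
    (hprob : IsProbabilityMeasure
      ((stdGaussian n).withDensity (fun x => ENNReal.ofReal (f x)))) :
    ∃ T : EuclideanSpace ℝ (Fin n) → EuclideanSpace ℝ (Fin n),
      LipschitzWith (Real.toNNReal (1 / Real.sqrt (1 - lam))) T ∧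
      (stdGaussian n).map T =
        (stdGaussian n).withDensity (fun x => ENNReal.ofReal (f x)) := by
  set s := √(1 - lam)
  have hs : 0 < s := sqrt_pos.2 (by linarith)
  have hf : Continuous f := continuous_of_concaveOn_log_sub (by fun_prop) hpos hconc
  have hdilate := map_smul_stdGaussian_withDensity hs hf.measurable
  obtain ⟨T, hT, hTγ⟩ := caffarelli (dilatedDensity s f) (dilatedDensity_pos hs hpos)
    (concaveOn_log_dilatedDensity hs (sq_sqrt (by linarith)) hpos hconc)
    (hdilate ▸ Measure.isProbabilityMeasure_map (measurable_const_smul s).aemeasurable)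
  refine ⟨(s⁻¹ • ·) ∘ T, ?_, ?_⟩
  · have hK : (1 / s).toNNReal = ‖s⁻¹‖₊ * 1 := by
      rw [mul_one, one_div, ← NNReal.coe_inj, coe_nnnorm, norm_of_nonneg (by positivity),
        coe_toNNReal _ (by positivity)]
    rw [hK]
    exact (lipschitzWith_smul s⁻¹).comp hT
  · rw [← Measure.map_map (measurable_const_smul _) hT.continuous.measurable, hTγ, ← hdilate,
      Measure.map_map (measurable_const_smul _) (measurable_const_smul _)]
    simp [Function.comp_def, inv_smul_smul₀ hs.ne']

/-- assuming Caffarelli's theorem, if `f > 0` is `(-λ)`-log-concave with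
`0 ≤ λ < 1` and `f dγ` is a probability measure, then `f dγ` is a
`(1/√(1-λ))`-Lipschitz image of `γ`. -/
theorem stmt_19 (n : ℕ)
    (caffarelli : ∀ g : EuclideanSpace ℝ (Fin n) → ℝ, (∀ x, 0 < g x) →
      ConcaveOn ℝ Set.univ (fun x => Real.log (g x)) →
      IsProbabilityMeasure ((stdGaussian n).withDensity (fun x => ENNReal.ofReal (g x))) →
      ∃ T : EuclideanSpace ℝ (Fin n) → EuclideanSpace ℝ (Fin n),
        LipschitzWith 1 T ∧
        (stdGaussian n).map T =
          (stdGaussian n).withDensity (fun x => ENNReal.ofReal (g x)))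
    (f : EuclideanSpace ℝ (Fin n) → ℝ) (hpos : ∀ x, 0 < f x)
    (lam : ℝ) (hlam0 : 0 ≤ lam) (hlam1 : lam < 1)
    (hconc : ConcaveOn ℝ Set.univ (fun x => Real.log (f x) - lam * ‖x‖ ^ 2 / 2))
    (hprob : IsProbabilityMeasure
      ((stdGaussian n).withDensity (fun x => ENNReal.ofReal (f x)))) :
    ∃ T : EuclideanSpace ℝ (Fin n) → EuclideanSpace ℝ (Fin n),
      LipschitzWith (Real.toNNReal (1 / Real.sqrt (1 - lam))) T ∧
      (stdGaussian n).map T =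
        (stdGaussian n).withDensity (fun x => ENNReal.ofReal (f x)) :=
  stmt_19_general n caffarelli f hpos lam hlam1 hconc hprob
end
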